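/- arXiv:2406.16697 — 7 statements merged into one kernel-verified Lean document; each statement's English description precedes it below -/
import Mathlib

section
/- Let b ≥ 2 and d ≥ 1 be natural numbers, let N = b^d, let 1 ≤ g ≤ N, let G ⊆ Fin N be a fixed set of size g, and let σ be a uniformly random permutation of Fin N. Define X(σ) = 1 + (the least index i such that σ(i) ∈ G). Then the expected value of (b^d − 1)/(b − 1) + X equals (b^d − 1)/(b − 1) + (b^d + 1)/(g + 1) (as real numbers). -/
/-! A permutation `σ` enters only through the set `σ⁻¹ G` of positions holding a goal, and each
`g`-subset of the `N` positions arises from exactly `g! (N - g)!` permutations. So `E[X]` is the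
average of `1 + min S` over `g`-subsets `S` of `{0, …, N - 1}`. Writing
`1 + min S = #{i ≤ N | i ≤ min S}` and counting the pairs `(S, i)` the other way, the sum over `S`
is `∑_{i ≤ N} C(N - i, g) = C(N + 1, g + 1)` (hockey stick), and
`C(N + 1, g + 1) / C(N, g) = (N + 1) / (g + 1)`. -/

open Finset Equiv
open scoped Nat

namespace Equiv

theorem subtypeCongr_apply {α : Type*} {p q : α → Prop} [DecidablePred p] [DecidablePred q]
    (e : {x // p x} ≃ {x // q x}) (f : {x // ¬p x} ≃ {x // ¬q x}) (a : α) :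
    subtypeCongr e f a = if h : p a then (e ⟨a, h⟩ : α) else f ⟨a, h⟩ := by
  by_cases h : p a
  · simp [subtypeCongr, sumCompl_symm_apply_of_pos h, h]
  · simp [subtypeCongr, sumCompl_symm_apply_of_neg h, h]

end Equiv

namespace Finset

variable {α : Type*} [DecidableEq α]

def permMapsOntoEquiv (s t : Finset α) :
    {σ : Perm α // ∀ a, a ∈ s ↔ σ a ∈ t} ≃ (s ≃ t) × ({a // a ∉ s} ≃ {a // a ∉ t}) where
  toFun σ := (σ.1.subtypeEquiv σ.2, σ.1.subtypeEquiv fun a => not_congr (σ.2 a))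
  invFun ef := ⟨subtypeCongr ef.1 ef.2, fun a => by
    by_cases h : a ∈ s <;> simp [subtypeCongr_apply, h, (ef.1 ⟨a, _⟩).2, (ef.2 ⟨a, _⟩).2]⟩
  left_inv σ := by
    ext a
    by_cases h : a ∈ s <;> simp [subtypeCongr_apply, h]
  right_inv ef := by
    ext a <;> simp [subtypeCongr_apply, a.2]

variable [Fintype α]

theorem card_permMapsOnto {s t : Finset α} (h : #s = #t) :
    Fintype.card {σ : Perm α // ∀ a, a ∈ s ↔ σ a ∈ t}
      = (#s)! * (Fintype.card α - #s)! := by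
  have hc : Fintype.card {a // a ∉ s} = Fintype.card {a // a ∉ t} := by
    simp [Fintype.card_subtype_compl, h]
  rw [Fintype.card_congr (permMapsOntoEquiv s t), Fintype.card_prod,
    Fintype.card_equiv (s.equivOfCardEq h), Fintype.card_equiv (Fintype.equivOfCardEq hc)]
  simp [Fintype.card_subtype_compl]

theorem sum_perm_map_symm {M : Type*} [AddCommMonoid M] (t : Finset α) (f : Finset α → M) :
    ∑ σ : Perm α, f (t.map σ.symm.toEmbedding)
      = ((#t)! * (Fintype.card α - #t)!) • ∑ s ∈ powersetCard #t univ, f s := by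
  have hmaps : ∀ σ ∈ (univ : Finset (Perm α)), t.map σ.symm.toEmbedding ∈ powersetCard #t univ :=
    fun σ _ => mem_powersetCard.2 ⟨subset_univ _, card_map _⟩
  rw [← sum_fiberwise_of_maps_to hmaps, smul_sum]
  refine sum_congr rfl fun s hs => ?_
  have hst : #s = #t := (mem_powersetCard.1 hs).2
  have hfiber : #{σ : Perm α | t.map σ.symm.toEmbedding = s}
      = (#t)! * (Fintype.card α - #t)! := by
    rw [← hst, ← card_permMapsOnto hst, Fintype.card_subtype]
    congr 1
    ext σ
    simpa [Finset.ext_iff, mem_map_equiv] using forall_congr' fun _ => Iff.comm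
  rw [sum_congr rfl fun σ hσ => congrArg f (mem_filter.1 hσ).2, sum_const, hfiber]

end Finset

namespace Nat

theorem sum_range_choose_eq_choose_succ (n k : ℕ) :
    ∑ i ∈ range (n + 1), i.choose k = (n + 1).choose (k + 1) := by
  induction n with
  | zero => cases k <;> simp [choose_eq_zero_of_lt]
  | succ n ih => rw [sum_range_succ, ih, choose_succ_succ' (n + 1) k, add_comm]

theorem factorial_mul_factorial_mul_choose_succ_div_factorial {n k : ℕ} (h : k ≤ n) :
    ((k ! * (n - k)! * (n + 1).choose (k + 1) : ℕ) : ℝ) / n ! = (n + 1) / (k + 1) := by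
  rw [div_eq_div_iff (by positivity) (by positivity)]
  have key : k ! * (n - k)! * (n + 1).choose (k + 1) * (k + 1) = (n + 1) * n ! := by
    calc _ = k ! * (n - k)! * ((n + 1).choose (k + 1) * (k + 1)) := by ring
      _ = k ! * (n - k)! * ((n + 1) * n.choose k) := by rw [add_one_mul_choose_eq]
      _ = (n + 1) * (n.choose k * k ! * (n - k)!) := by ring
      _ = (n + 1) * n ! := by rw [choose_mul_factorial_mul_factorial h]
  exact_mod_cast key

end Nat

namespace Finset

theorem one_add_min'_eq_card_filter {s : Finset ℕ} (hs : s.Nonempty) {n : ℕ}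
    (hsn : s ⊆ range n) : 1 + s.min' hs = #{i ∈ range (n + 1) | ∀ x ∈ s, i ≤ x} := by
  have hlt : s.min' hs < n := mem_range.1 (hsn (s.min'_mem hs))
  have : {i ∈ range (n + 1) | ∀ x ∈ s, i ≤ x} = range (s.min' hs + 1) := by
    ext i
    simp only [mem_filter, mem_range, ← le_min'_iff s hs]
    omega
  rw [this, card_range, add_comm]

theorem sum_powersetCard_range_one_add_sInf {k : ℕ} (hk : k ≠ 0) (n : ℕ) :
    ∑ s ∈ powersetCard k (range n), (1 + sInf (s : Set ℕ)) = (n + 1).choose (k + 1) := by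
  calc ∑ s ∈ powersetCard k (range n), (1 + sInf (s : Set ℕ))
      = ∑ s ∈ powersetCard k (range n), #{i ∈ range (n + 1) | ∀ x ∈ s, i ≤ x} := by
        refine sum_congr rfl fun s hs => ?_
        obtain ⟨hsn, hsk⟩ := mem_powersetCard.1 hs
        have hne : s.Nonempty := card_pos.1 (hsk ▸ Nat.pos_of_ne_zero hk)
        rw [hne.csInf_eq_min', one_add_min'_eq_card_filter hne hsn]
    _ = ∑ i ∈ range (n + 1), #{s ∈ powersetCard k (range n) | ∀ x ∈ s, i ≤ x} :=
        sum_card_bipartiteAbove_eq_sum_card_bipartiteBelow _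
    _ = ∑ i ∈ range (n + 1), (n - i).choose k := by
        refine sum_congr rfl fun i _ => ?_
        have : {s ∈ powersetCard k (range n) | ∀ x ∈ s, i ≤ x} = powersetCard k (Ico i n) := by
          ext s
          simp only [mem_filter, mem_powersetCard, subset_iff, mem_range, mem_Ico]
          grind
        rw [this, card_powersetCard, Nat.card_Ico]
    _ = ∑ i ∈ range (n + 1), i.choose k := by
        simpa using sum_range_reflect (·.choose k) (n + 1)
    _ = (n + 1).choose (k + 1) := Nat.sum_range_choose_eq_choose_succ n k

end Finset

theorem Fin.sum_powersetCard_univ_map_valEmbedding {M : Type*} [AddCommMonoid M] (n k : ℕ)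
    (f : Finset ℕ → M) :
    ∑ s ∈ powersetCard k (univ : Finset (Fin n)), f (s.map Fin.valEmbedding)
      = ∑ s ∈ powersetCard k (range n), f s := by
  rw [← Nat.Iio_eq_range, ← Fin.map_valEmbedding_univ, powersetCard_map, sum_map]
  rfl

theorem Fin.sum_perm_one_add_sInf_index_mem {n : ℕ} {G : Finset (Fin n)} (hG : G.Nonempty) :
    ∑ σ : Perm (Fin n), (1 + sInf {i : ℕ | ∃ h : i < n, σ ⟨i, h⟩ ∈ G})
      = (#G)! * (n - #G)! * (n + 1).choose (#G + 1) := by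
  have hset : ∀ σ : Perm (Fin n), {i : ℕ | ∃ h : i < n, σ ⟨i, h⟩ ∈ G}
      = ((G.map σ.symm.toEmbedding).map Fin.valEmbedding : Set ℕ) := by
    intro σ
    ext i
    simp [Fin.exists_iff]
  simp only [hset]
  rw [sum_perm_map_symm G (fun s => 1 + sInf ((s.map Fin.valEmbedding : Finset ℕ) : Set ℕ)),
    Fintype.card_fin, sum_powersetCard_univ_map_valEmbedding n #G (fun s => 1 + sInf (s : Set ℕ)),
    sum_powersetCard_range_one_add_sInf (card_pos.2 hG).ne', smul_eq_mul]

theorem brfs_tree_expected_tests_general (b d g : ℕ)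
    (hg1 : 1 ≤ g)
    (G : Finset (Fin (b ^ d))) (hG : G.card = g) :
    (∑ σ : Equiv.Perm (Fin (b ^ d)),
        (((b : ℝ) ^ d - 1) / ((b : ℝ) - 1)
          + ((1 + sInf {n : ℕ | ∃ h : n < b ^ d, σ ⟨n, h⟩ ∈ G} : ℕ) : ℝ)))
      / (Fintype.card (Equiv.Perm (Fin (b ^ d))) : ℝ)
    = ((b : ℝ) ^ d - 1) / ((b : ℝ) - 1) + ((b : ℝ) ^ d + 1) / ((g : ℝ) + 1) := by
  have hgN : g ≤ b ^ d := hG ▸ G.card_le_univ.trans_eq (Fintype.card_fin _)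
  have hGne : G.Nonempty := card_pos.1 (hG ▸ hg1)
  rw [sum_add_distrib, sum_const, card_univ, nsmul_eq_mul, add_div,
    mul_div_cancel_left₀ _ (by positivity), ← Nat.cast_sum,
    Fin.sum_perm_one_add_sInf_index_mem hGne, hG, Fintype.card_perm, Fintype.card_fin,
    Nat.factorial_mul_factorial_mul_choose_succ_div_factorial hgN, Nat.cast_pow]

/-- BrFS on a directed tree with branching factor `b ≥ 2` and `g` goals
uniformly distributed among the `b^d` vertices at goal level `d`: the expected number
of goal tests `(b^d - 1)/(b - 1) + X` equals
`(b^d - 1)/(b - 1) + (b^d + 1)/(g + 1)`, where `X(σ) = 1 + (least index i with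
σ i ∈ G)` for a uniformly random permutation `σ` of the goal level. -/
theorem brfs_tree_expected_tests (b d g : ℕ) (hb : 2 ≤ b) (hd : 1 ≤ d)
    (hg1 : 1 ≤ g) (hgN : g ≤ b ^ d)
    (G : Finset (Fin (b ^ d))) (hG : G.card = g) :
    (∑ σ : Equiv.Perm (Fin (b ^ d)),
        (((b : ℝ) ^ d - 1) / ((b : ℝ) - 1)
          + ((1 + sInf {n : ℕ | ∃ h : n < b ^ d, σ ⟨n, h⟩ ∈ G} : ℕ) : ℝ)))
      / (Fintype.card (Equiv.Perm (Fin (b ^ d))) : ℝ)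
    = ((b : ℝ) ^ d - 1) / ((b : ℝ) - 1) + ((b : ℝ) ^ d + 1) / ((g : ℝ) + 1) :=
  brfs_tree_expected_tests_general b d g hg1 G hG
end

section
/- Let b ≥ 2, d ≥ 2, and t be natural numbers with t ≥ d and t > 2, and let g = b^d. Then (as real numbers) (b^d − 1)/(b − 1) + (b^d + 1)/(g + 1) ≥ t·b^d/g − (t − d) + 1; equivalently, (b^d − 1)/(b − 1) ≥ d. -/
/-! With `g = b ^ d` the terms `(b ^ d + 1) / (g + 1)` and `t * b ^ d / g` collapse to `1` and `t`,
so both claims reduce to `d ≤ (b ^ d - 1) / (b - 1)`, which is Bernoulli's inequality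
`1 + d (b - 1) ≤ b ^ d`. -/

theorem natCast_le_pow_sub_one_div_sub_one {K : Type*} [Field K] [LinearOrder K]
    [IsStrictOrderedRing K] {x : K} (hx : 1 < x) (n : ℕ) :
    (n : K) ≤ (x ^ n - 1) / (x - 1) := by
  rw [le_div_iff₀ (sub_pos.2 hx)]
  linarith [one_add_mul_sub_le_pow (by linarith : (-1 : K) ≤ x) n]

theorem crossover_case_all_goals_general (b d t g : ℕ) (hb : 2 ≤ b) (hg : g = b ^ d) :
    ((b : ℝ) ^ d - 1) / ((b : ℝ) - 1) + ((b : ℝ) ^ d + 1) / ((g : ℝ) + 1)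
        ≥ (t : ℝ) * (b : ℝ) ^ d / (g : ℝ) - ((t : ℝ) - (d : ℝ)) + 1
    ∧ ((b : ℝ) ^ d - 1) / ((b : ℝ) - 1) ≥ (d : ℝ) := by
  have hb₁ : (1 : ℝ) < b := by exact_mod_cast hb
  have hdepth := natCast_le_pow_sub_one_div_sub_one hb₁ d
  have hg' : (g : ℝ) = (b : ℝ) ^ d := by rw [hg]; push_cast; rfl
  have hpow : (0 : ℝ) < (b : ℝ) ^ d := by positivity
  refine ⟨?_, hdepth⟩
  rw [hg', div_self (by positivity), mul_div_cancel_right₀ _ hpow.ne']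
  linarith

/-- Case 1 (`g = b^d`) of the crossover theorem: for `b ≥ 2`, `d ≥ 2`,
`t ≥ d`, `t > 2`, the expected goal tests of BrFS are at least those of RRW,
`(b^d - 1)/(b - 1) + (b^d + 1)/(g + 1) ≥ t·b^d/g - (t - d) + 1`; equivalently,
`(b^d - 1)/(b - 1) ≥ d`. -/
theorem crossover_case_all_goals (b d t g : ℕ) (hb : 2 ≤ b) (hd : 2 ≤ d)
    (htd : d ≤ t) (ht : 2 < t) (hg : g = b ^ d) :
    ((b : ℝ) ^ d - 1) / ((b : ℝ) - 1) + ((b : ℝ) ^ d + 1) / ((g : ℝ) + 1)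
        ≥ (t : ℝ) * (b : ℝ) ^ d / (g : ℝ) - ((t : ℝ) - (d : ℝ)) + 1
    ∧ ((b : ℝ) ^ d - 1) / ((b : ℝ) - 1) ≥ (d : ℝ) :=
  crossover_case_all_goals_general b d t g hb hg
end

section
/- Let b ≥ 2, d ≥ 2, t, and g be natural numbers with t ≥ d, t > 2, 1 ≤ g < b^d, and g ≥ (t − 1)(b − 1) + 1. Then (as real numbers) (b^d − 1)/(b − 1) + (b^d + 1)/(g + 1) ≥ t·b^d/g − (t − d) + 1. -/
/-!
Write `β = b - 1` and `B = b ^ d`. After clearing denominators, the difference of the two sides is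
linear in `t` and decreasing, so it is smallest at the largest (real) depth `t = (g - 1) / β + 1`
permitted by the threshold; there it equals `(B - g) (g + 1 - β) + g (g + 1) (g - 1 - d β)`, which
is visibly nonnegative once `g > d β`. Otherwise the threshold forces `t = d ≥ 3` and `(d - 1) β < g ≤ d β`, and then the
Bernoulli-type bound `b ^ d ≥ (1 + (d - 2) β) b ^ 2` suffices: in the offsets of `β`, `d` and `g`
from their extreme values, the resulting polynomial has only positive coefficients.
-/

/-- `β g (g + 1)` times the difference of the two sides at the depth `t = (g - 1) / β + 1`. -/
def thresholdGap (β d g B : ℝ) : ℝ :=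
  (B - g) * (g + 1 - β) + g * (g + 1) * (g - 1 - d * β)

lemma brfs_ge_rrw_of_thresholdGap_nonneg {β d t g B : ℝ} (hβ : 0 < β) (hg : 0 < g)
    (hgt : (t - 1) * β + 1 ≤ g) (hgB : g ≤ B) (hgap : 0 ≤ thresholdGap β d g B) :
    (B - 1) / β + (B + 1) / (g + 1) ≥ t * B / g - (t - d) + 1 := by
  have hdiff : (B - 1) / β + (B + 1) / (g + 1) - (t * B / g - (t - d) + 1) =
      (thresholdGap β d g B + (g - 1 - (t - 1) * β) * (g + 1) * (B - g)) / (β * g * (g + 1)) := by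
    unfold thresholdGap
    field_simp
    ring
  rw [ge_iff_le, ← sub_nonneg, hdiff]
  have hslack : 0 ≤ (g - 1 - (t - 1) * β) * (g + 1) * (B - g) :=
    mul_nonneg (mul_nonneg (by linarith) (by linarith)) (by linarith)
  positivity

lemma thresholdGap_nonneg_of_lt {β d g B : ℝ} (hg : 0 ≤ g) (hgβ : β ≤ g + 1)
    (hdg : d * β + 1 ≤ g) (hgB : g ≤ B) : 0 ≤ thresholdGap β d g B := by
  unfold thresholdGap
  have := mul_nonneg (sub_nonneg.2 hgB) (sub_nonneg.2 hgβ)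
  have := mul_nonneg (mul_nonneg hg (by linarith : 0 ≤ g + 1)) (by linarith : 0 ≤ g - 1 - d * β)
  linarith

lemma one_add_mul_mul_sq_le_pow {x : ℝ} (hx : 0 ≤ x) {d : ℕ} (hd : 2 ≤ d) :
    (1 + ((d : ℝ) - 2) * x) * (1 + x) ^ 2 ≤ (1 + x) ^ d := by
  obtain ⟨n, rfl⟩ := Nat.exists_eq_add_of_le' hd
  have hbern : 1 + (n : ℝ) * x ≤ (1 + x) ^ n := one_add_mul_le_pow (by linarith) n
  push_cast
  rw [add_sub_cancel_right, pow_add]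
  gcongr

lemma thresholdGap_le_thresholdGap_of_le {β d g B B' : ℝ} (hgβ : β ≤ g + 1) (hB : B ≤ B') :
    thresholdGap β d g B ≤ thresholdGap β d g B' := by
  unfold thresholdGap
  gcongr

lemma thresholdGap_nonneg_of_le {β d g B : ℝ} (hβ : 1 ≤ β) (hd : 3 ≤ d)
    (hgl : (d - 1) * β + 1 ≤ g) (hgu : g ≤ d * β) (hB : (1 + (d - 2) * β) * (1 + β) ^ 2 ≤ B) :
    0 ≤ thresholdGap β d g B := by
  refine le_trans ?_ (thresholdGap_le_thresholdGap_of_le (by nlinarith) hB)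
  obtain ⟨p, hp, rfl⟩ : ∃ p ≥ 0, g = (d - 1) * β + 1 + p :=
    ⟨g - ((d - 1) * β + 1), by linarith, by ring⟩
  obtain ⟨q, hq, rfl⟩ : ∃ q ≥ 0, β = 1 + p + q := ⟨β - 1 - p, by linarith, by ring⟩
  obtain ⟨e, he, rfl⟩ : ∃ e ≥ 0, d = 3 + e := ⟨d - 3, by linarith, by ring⟩
  unfold thresholdGap
  ring_nf
  positivity

theorem crossover_case_threshold_general (b d t g : ℕ) (hb : 2 ≤ b)
    (htd : d ≤ t) (ht : 2 < t) (hg1 : 1 ≤ g) (hg2 : g < b ^ d)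
    (hg3 : (t - 1) * (b - 1) + 1 ≤ g) :
    ((b : ℝ) ^ d - 1) / ((b : ℝ) - 1) + ((b : ℝ) ^ d + 1) / ((g : ℝ) + 1)
      ≥ (t : ℝ) * (b : ℝ) ^ d / (g : ℝ) - ((t : ℝ) - (d : ℝ)) + 1 := by
  have hb1 : 1 ≤ b := by omega
  have hβ : (1 : ℝ) ≤ (b : ℝ) - 1 := by
    rify at hb
    linarith
  have hgB : (g : ℝ) ≤ (b : ℝ) ^ d := by exact_mod_cast hg2.le
  have hgt : ((t : ℝ) - 1) * ((b : ℝ) - 1) + 1 ≤ g := by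
    rify [hb1, (by omega : 1 ≤ t)] at hg3
    exact hg3
  refine brfs_ge_rrw_of_thresholdGap_nonneg (by linarith) (by exact_mod_cast hg1) hgt hgB ?_
  rcases le_or_gt g (d * (b - 1)) with htight | hlarge
  · obtain rfl : t = d := by
      have := Nat.lt_of_mul_lt_mul_right (by omega : (t - 1) * (b - 1) < d * (b - 1))
      omega
    rify [hb1] at htight
    refine thresholdGap_nonneg_of_le hβ (by exact_mod_cast ht) hgt htight ?_
    simpa only [add_sub_cancel] using
      one_add_mul_mul_sq_le_pow (by linarith : (0 : ℝ) ≤ (b : ℝ) - 1) ht.le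
  · replace hlarge : d * (b - 1) + 1 ≤ g := hlarge
    rify [hb1] at hlarge ht
    refine thresholdGap_nonneg_of_lt (by positivity) ?_ hlarge hgB
    nlinarith

/-- Case 2 of the crossover theorem: for `b ≥ 2`, `d ≥ 2`, `t ≥ d`,
`t > 2`, and `1 ≤ g < b^d` with `g ≥ (t - 1)(b - 1) + 1`, the expected goal tests of
BrFS are at least those of RRW:
`(b^d - 1)/(b - 1) + (b^d + 1)/(g + 1) ≥ t·b^d/g - (t - d) + 1`. -/
theorem crossover_case_threshold (b d t g : ℕ) (hb : 2 ≤ b) (hd : 2 ≤ d)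
    (htd : d ≤ t) (ht : 2 < t) (hg1 : 1 ≤ g) (hg2 : g < b ^ d)
    (hg3 : (t - 1) * (b - 1) + 1 ≤ g) :
    ((b : ℝ) ^ d - 1) / ((b : ℝ) - 1) + ((b : ℝ) ^ d + 1) / ((g : ℝ) + 1)
      ≥ (t : ℝ) * (b : ℝ) ^ d / (g : ℝ) - ((t : ℝ) - (d : ℝ)) + 1 :=
  crossover_case_threshold_general b d t g hb htd ht hg1 hg2 hg3
end

section
/- Let b ≥ 2 and t ≥ 1 be natural numbers and let g be a natural number with 1 ≤ g ≤ b. Then (as real numbers) for the goal level d = 1: if g < b then 1 + (b + 1)/(g + 1) < t·b/g − (t − 1) + 1, and if g = b then 1 + (b + 1)/(g + 1) = t·b/g − (t − 1) + 1. -/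
/-! The gap between the two expected costs factors as `(b - g) * (t / g - 1 / (g + 1))`,
whose second factor is positive as soon as `t ≥ 1`. -/

theorem rrw_sub_brfs_eq_mul {K : Type*} [Field K] {b g t : K} (hg : g ≠ 0) (hg' : g + 1 ≠ 0) :
    t * b / g - (t - 1) + 1 - (1 + (b + 1) / (g + 1)) = (b - g) * (t / g - 1 / (g + 1)) := by
  field_simp
  ring

theorem one_div_add_one_lt_div {K : Type*} [Field K] [LinearOrder K] [IsStrictOrderedRing K]
    {g t : K} (hg : 0 < g) (ht : 1 ≤ t) : 1 / (g + 1) < t / g :=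
  calc 1 / (g + 1) < 1 / g := one_div_lt_one_div_of_lt hg (lt_add_one g)
    _ ≤ t / g := div_le_div_of_nonneg_right ht hg.le

theorem depth_one_brfs_faster_general (b t g : ℕ) (ht : 1 ≤ t)
    (hg1 : 1 ≤ g) :
    (g < b → 1 + ((b : ℝ) + 1) / ((g : ℝ) + 1)
        < (t : ℝ) * (b : ℝ) / (g : ℝ) - ((t : ℝ) - 1) + 1)
    ∧ (g = b → 1 + ((b : ℝ) + 1) / ((g : ℝ) + 1)
        = (t : ℝ) * (b : ℝ) / (g : ℝ) - ((t : ℝ) - 1) + 1) := by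
  have hg : (0 : ℝ) < g := by exact_mod_cast hg1
  have gap := rrw_sub_brfs_eq_mul (b := (b : ℝ)) (t := (t : ℝ)) hg.ne' (by positivity)
  refine ⟨fun hlt => ?_, fun heq => ?_⟩
  · have hgb : (g : ℝ) < b := by exact_mod_cast hlt
    have hfactor := one_div_add_one_lt_div hg (by exact_mod_cast ht : (1 : ℝ) ≤ t)
    rw [← sub_pos, gap]
    exact mul_pos (sub_pos.2 hgb) (sub_pos.2 hfactor)
  · subst heq
    rw [sub_self, zero_mul, sub_eq_zero] at gap
    exact gap.symm

/-- For goal level `d = 1`, `b ≥ 2`, walk depth `t ≥ 1`, and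
`1 ≤ g ≤ b`: if `g < b` then BrFS is strictly faster in expectation than RRW,
`1 + (b + 1)/(g + 1) < t·b/g - (t - 1) + 1`, and if `g = b` the two expectations
are equal. -/
theorem depth_one_brfs_faster (b t g : ℕ) (hb : 2 ≤ b) (ht : 1 ≤ t)
    (hg1 : 1 ≤ g) (hgb : g ≤ b) :
    (g < b → 1 + ((b : ℝ) + 1) / ((g : ℝ) + 1)
        < (t : ℝ) * (b : ℝ) / (g : ℝ) - ((t : ℝ) - 1) + 1)
    ∧ (g = b → 1 + ((b : ℝ) + 1) / ((g : ℝ) + 1)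
        = (t : ℝ) * (b : ℝ) / (g : ℝ) - ((t : ℝ) - 1) + 1) :=
  depth_one_brfs_faster_general b t g ht hg1
end

section
/- Let b ≥ 2 and g be natural numbers with b + 1 ≤ g ≤ b². Then (as real numbers) (b² − 1)/(b − 1) + (b² + 1)/(g + 1) ≥ 2·b²/g + 1. -/
/-!
The breadth-first side is `(b + 1) + (b² + 1)/(g + 1)`, the geometric sum `(b² - 1)/(b - 1)`
being `b + 1`. Over the common denominator `g (g + 1)` the difference of the two sides has
numerator `b g (g - b + 1) + g - 2b²`, which is nonnegative once `g ≥ b + 1`, because then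
`b g (g - b + 1) ≥ 2 b g ≥ 2 b (b + 1)`.
-/

lemma sq_sub_one_div_sub_one {b : ℝ} (hb : b ≠ 1) : (b ^ 2 - 1) / (b - 1) = b + 1 := by
  rw [div_eq_iff (sub_ne_zero.mpr hb)]
  ring

lemma crossover_numerator_nonneg {b g : ℝ} (hb : 0 ≤ b) (hg : b + 1 ≤ g) :
    0 ≤ b * g * (g - b + 1) + g - 2 * b ^ 2 := by
  have hbg₀ : 0 ≤ b * g := mul_nonneg hb (by linarith)
  have hgap : b * g * 2 ≤ b * g * (g - b + 1) :=
    mul_le_mul_of_nonneg_left (by linarith) hbg₀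
  have hbg : b * (b + 1) ≤ b * g := mul_le_mul_of_nonneg_left hg hb
  linarith

lemma two_mul_sq_div_add_one_le {b g : ℝ} (hb : 0 ≤ b) (hg : b + 1 ≤ g) :
    2 * b ^ 2 / g + 1 ≤ b + 1 + (b ^ 2 + 1) / (g + 1) := by
  have hg₀ : 0 < g := by linarith
  have hdiff : b + 1 + (b ^ 2 + 1) / (g + 1) - (2 * b ^ 2 / g + 1)
      = (b * g * (g - b + 1) + g - 2 * b ^ 2) / (g * (g + 1)) := by
    field_simp
    ring
  rw [← sub_nonneg, hdiff]
  exact div_nonneg (crossover_numerator_nonneg hb hg) (by positivity)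

theorem depth_two_crossover_general (b g : ℕ) (hb : 2 ≤ b) (hg1 : b + 1 ≤ g) :
    ((b : ℝ) ^ 2 - 1) / ((b : ℝ) - 1) + ((b : ℝ) ^ 2 + 1) / ((g : ℝ) + 1)
      ≥ 2 * (b : ℝ) ^ 2 / (g : ℝ) + 1 := by
  have hb₁ : (b : ℝ) ≠ 1 := by norm_cast; omega
  rw [sq_sub_one_div_sub_one hb₁]
  exact two_mul_sq_div_add_one_le (Nat.cast_nonneg b) (by exact_mod_cast hg1)

/-- For `b ≥ 2` and `b + 1 ≤ g ≤ b²` (goal level `d = 2`, depth error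
`e = 1`, i.e. `t = 2`), BrFS's expected goal tests are at least RRW's:
`(b² - 1)/(b - 1) + (b² + 1)/(g + 1) ≥ 2b²/g + 1`. -/
theorem depth_two_crossover (b g : ℕ) (hb : 2 ≤ b) (hg1 : b + 1 ≤ g)
    (hg2 : g ≤ b ^ 2) :
    ((b : ℝ) ^ 2 - 1) / ((b : ℝ) - 1) + ((b : ℝ) ^ 2 + 1) / ((g : ℝ) + 1)
      ≥ 2 * (b : ℝ) ^ 2 / (g : ℝ) + 1 :=
  depth_two_crossover_general b g hb hg1
end

section
/- Let b ≥ 2 be a natural number and set g = b. Then (as real numbers) (b² − 1)/(b − 1) + (b² + 1)/(g + 1) < 2·b²/g + 1; that is, (b + 1) + (b² + 1)/(b + 1) < 2b + 1. -/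
/-! With `g = b` the breadth-first count simplifies to `(b + 1) + (b² + 1)/(b + 1)` and the
random-walk count to `2b + 1`, so both inequalities reduce to `(b² + 1)/(b + 1) < b`,
i.e. to `b² + 1 < b² + b`, which holds as soon as `1 < b`. -/

theorem sq_sub_one_div_sub_one_s10 {K : Type*} [Field K] {x : K} (hx : x ≠ 1) :
    (x ^ 2 - 1) / (x - 1) = x + 1 := by
  rw [div_eq_iff (sub_ne_zero.mpr hx)]
  ring

section

variable {K : Type*} [Field K] [LinearOrder K] [IsStrictOrderedRing K]

theorem sq_add_one_div_add_one_lt {x : K} (hx : 1 < x) : (x ^ 2 + 1) / (x + 1) < x := by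
  rw [div_lt_iff₀ (by linarith)]
  linarith

theorem add_one_add_sq_add_one_div_lt {x : K} (hx : 1 < x) :
    (x + 1) + (x ^ 2 + 1) / (x + 1) < 2 * x + 1 := by
  linarith [sq_add_one_div_add_one_lt hx]

end

/-- For `b ≥ 2` and `g = b` (goal level `d = 2`, walk depth `t = 2`),
BrFS is still strictly faster in expectation than RRW:
`(b² - 1)/(b - 1) + (b² + 1)/(g + 1) < 2b²/g + 1`; that is,
`(b + 1) + (b² + 1)/(b + 1) < 2b + 1`. -/
theorem depth_two_threshold_tight (b g : ℕ) (hb : 2 ≤ b) (hg : g = b) :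
    ((b : ℝ) ^ 2 - 1) / ((b : ℝ) - 1) + ((b : ℝ) ^ 2 + 1) / ((g : ℝ) + 1)
        < 2 * (b : ℝ) ^ 2 / (g : ℝ) + 1
    ∧ ((b : ℝ) + 1) + ((b : ℝ) ^ 2 + 1) / ((b : ℝ) + 1) < 2 * (b : ℝ) + 1 := by
  subst g
  have hb₁ : (1 : ℝ) < b := by exact_mod_cast hb
  have hrrw : 2 * (b : ℝ) ^ 2 / b = 2 * b := by
    rw [div_eq_iff (by positivity)]
    ring
  refine ⟨?_, add_one_add_sq_add_one_div_lt hb₁⟩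
  rw [sq_sub_one_div_sub_one_s10 hb₁.ne', hrrw]
  exact add_one_add_sq_add_one_div_lt hb₁
end

section
/- Let b ≥ 2 be a natural number and e ≥ 1 a real number. For natural numbers d ≥ 1, define f(d) = ((e·d − 1)(b − 1) + 1) / b^d (a real number). Then f is nonincreasing in d, i.e., f(d + 1) ≤ f(d) for all d ≥ 1. -/
/-!
Write `N d = (e·d - 1)(b - 1) + 1` for the crossover threshold. Passing from `d` to `d + 1` adds
`e·(b - 1)` to `N d`, and `N d ≥ e` once `d ≥ 1`, so `N (d + 1) ≤ b · N d`: the numerator grows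
by at most the factor `b` by which the denominator `b ^ d` grows.
-/

theorem div_pow_succ_le_div_pow {b x y : ℝ} (hb : 0 < b) (hxy : x ≤ b * y) (n : ℕ) :
    x / b ^ (n + 1) ≤ y / b ^ n :=
  calc x / b ^ (n + 1) ≤ b * y / b ^ (n + 1) := by gcongr
    _ = y / b ^ n := by rw [pow_succ', mul_div_mul_left _ _ hb.ne']

def crossoverThreshold (e b : ℝ) (d : ℕ) : ℝ := (e * d - 1) * (b - 1) + 1

section

variable {e b : ℝ}

theorem crossoverThreshold_succ (d : ℕ) :
    crossoverThreshold e b (d + 1) = crossoverThreshold e b d + e * (b - 1) := by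
  unfold crossoverThreshold
  push_cast
  ring

theorem le_crossoverThreshold (he : 1 ≤ e) (hb : 2 ≤ b) {d : ℕ} (hd : 1 ≤ d) :
    e ≤ crossoverThreshold e b d := by
  have hd' : (1 : ℝ) ≤ d := by exact_mod_cast hd
  have hed : e - 1 ≤ e * d - 1 := by nlinarith
  have hprod : (e - 1) * 1 ≤ (e * d - 1) * (b - 1) :=
    mul_le_mul hed (by linarith) zero_le_one (by linarith)
  unfold crossoverThreshold
  linarith

theorem crossoverThreshold_succ_le_mul (he : 1 ≤ e) (hb : 2 ≤ b) {d : ℕ} (hd : 1 ≤ d) :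
    crossoverThreshold e b (d + 1) ≤ b * crossoverThreshold e b d := by
  have hstep : e * (b - 1) ≤ crossoverThreshold e b d * (b - 1) :=
    mul_le_mul_of_nonneg_right (le_crossoverThreshold he hb hd) (by linarith)
  rw [crossoverThreshold_succ]
  linarith

end

/-- For `b ≥ 2` and real depth error `e ≥ 1`, the goal density
crossover `f(d) = ((e·d - 1)(b - 1) + 1) / b^d` is nonincreasing in `d ≥ 1`. -/
theorem density_crossover_nonincreasing (b : ℕ) (hb : 2 ≤ b) (e : ℝ) (he : 1 ≤ e) :
    ∀ d : ℕ, 1 ≤ d →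
      ((e * (↑(d + 1) : ℝ) - 1) * ((b : ℝ) - 1) + 1) / (b : ℝ) ^ (d + 1)
        ≤ ((e * (d : ℝ) - 1) * ((b : ℝ) - 1) + 1) / (b : ℝ) ^ d := by
  intro d hd
  have hb' : (2 : ℝ) ≤ b := by exact_mod_cast hb
  exact div_pow_succ_le_div_pow (by linarith) (crossoverThreshold_succ_le_mul he hb' hd) d
end
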